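/- arXiv:1608.05944 — 3 statements merged into one kernel-verified Lean document; each statement's English description precedes it below -/
import Mathlib

section
/- Let a ∈ ℝ and define X : ℝ² → ℝ³ by X(u,v) = ( (sinh a − cosh a)·(u²v/2 − v³/6) + v·cosh a + u²/2 − v²/2 − 1 , u + (sinh a − cosh a)·u·v , (sinh a − cosh a)·(u²v/2 − v³/6) + v·sinh a + u²/2 − v²/2 ). Then: (i) each coordinate function of X is harmonic on ℝ² (∂²X_k/∂u² + ∂²X_k/∂v² = 0); and (ii) X is Lorentz-conformal, i.e. ⟨X_u,X_u⟩_L = ⟨X_v,X_v⟩_L and ⟨X_u,X_v⟩_L = 0 everywhere. -/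
open Real

/-- Lorentzian inner product on ℝ³: ⟨p,q⟩ = p₁q₁ + p₂q₂ − p₃q₃. -/
noncomputable def lorentz (p q : ℝ × ℝ × ℝ) : ℝ :=
  p.1 * q.1 + p.2.1 * q.2.1 - p.2.2 * q.2.2

/-- First coordinate of the Björling surface based on a circle with lightlike axis. -/
noncomputable def X1 (a u v : ℝ) : ℝ :=
  (sinh a - cosh a) * (u^2 * v / 2 - v^3 / 6) + v * cosh a + u^2 / 2 - v^2 / 2 - 1

/-- Second coordinate of the Björling surface based on a circle with lightlike axis. -/
noncomputable def X2 (a u v : ℝ) : ℝ :=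
  u + (sinh a - cosh a) * u * v

/-- Third coordinate of the Björling surface based on a circle with lightlike axis. -/
noncomputable def X3 (a u v : ℝ) : ℝ :=
  (sinh a - cosh a) * (u^2 * v / 2 - v^3 / 6) + v * sinh a + u^2 / 2 - v^2 / 2

/-- Partial derivative of X with respect to u. -/
noncomputable def Xu (a u v : ℝ) : ℝ × ℝ × ℝ :=
  (deriv (fun s => X1 a s v) u, deriv (fun s => X2 a s v) u, deriv (fun s => X3 a s v) u)

/-- Partial derivative of X with respect to v. -/
noncomputable def Xv (a u v : ℝ) : ℝ × ℝ × ℝ :=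
  (deriv (fun t => X1 a u t) v, deriv (fun t => X2 a u t) v, deriv (fun t => X3 a u t) v)

/-!
Every coordinate of `X` is a polynomial of degree at most three in `u` and `v`, so both claims
are identities between explicit partial derivatives; once these are computed, the conformality
relations come down to `cosh² a - sinh² a = 1`.
-/

section Surface

variable (a : ℝ)

lemma deriv_X1_fst (v : ℝ) :
    deriv (fun s => X1 a s v) = fun u => (sinh a - cosh a) * u * v + u := by
  funext u
  simp (disch := fun_prop) [X1, deriv_fun_add, deriv_fun_sub, deriv_fun_pow, deriv_fun_mul]
  ring

lemma deriv_X1_snd (u : ℝ) :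
    deriv (fun t => X1 a u t) = fun v => (sinh a - cosh a) * (u ^ 2 - v ^ 2) / 2 - v + cosh a := by
  funext v
  simp (disch := fun_prop) [X1, deriv_fun_add, deriv_fun_sub, deriv_fun_pow, deriv_fun_mul]
  ring

lemma deriv_X2_fst (v : ℝ) :
    deriv (fun s => X2 a s v) = fun _ => 1 + (sinh a - cosh a) * v := by
  funext u
  simp (disch := fun_prop) [X2, deriv_fun_add]

lemma deriv_X2_snd (u : ℝ) :
    deriv (fun t => X2 a u t) = fun _ => (sinh a - cosh a) * u := by
  funext v
  simp (disch := fun_prop) [X2, deriv_fun_add]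

lemma deriv_X3_fst (v : ℝ) :
    deriv (fun s => X3 a s v) = fun u => (sinh a - cosh a) * u * v + u := by
  funext u
  simp (disch := fun_prop) [X3, deriv_fun_add, deriv_fun_sub, deriv_fun_pow, deriv_fun_mul]
  ring

lemma deriv_X3_snd (u : ℝ) :
    deriv (fun t => X3 a u t) = fun v => (sinh a - cosh a) * (u ^ 2 - v ^ 2) / 2 - v + sinh a := by
  funext v
  simp (disch := fun_prop) [X3, deriv_fun_add, deriv_fun_sub, deriv_fun_pow, deriv_fun_mul]
  ring

lemma harmonic_X1 (u v : ℝ) :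
    deriv (deriv fun s => X1 a s v) u + deriv (deriv fun t => X1 a u t) v = 0 := by
  rw [deriv_X1_fst, deriv_X1_snd]
  simp (disch := fun_prop) [deriv_fun_add, deriv_fun_sub, deriv_fun_pow, deriv_fun_mul]
  ring

lemma harmonic_X2 (u v : ℝ) :
    deriv (deriv fun s => X2 a s v) u + deriv (deriv fun t => X2 a u t) v = 0 := by
  simp [deriv_X2_fst, deriv_X2_snd]

lemma harmonic_X3 (u v : ℝ) :
    deriv (deriv fun s => X3 a s v) u + deriv (deriv fun t => X3 a u t) v = 0 := by
  rw [deriv_X3_fst, deriv_X3_snd]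
  simp (disch := fun_prop) [deriv_fun_add, deriv_fun_sub, deriv_fun_pow, deriv_fun_mul]
  ring

lemma Xu_eq (u v : ℝ) :
    Xu a u v = ((sinh a - cosh a) * u * v + u, 1 + (sinh a - cosh a) * v,
      (sinh a - cosh a) * u * v + u) := by
  simp only [Xu, deriv_X1_fst, deriv_X2_fst, deriv_X3_fst]

lemma Xv_eq (u v : ℝ) :
    Xv a u v = ((sinh a - cosh a) * (u ^ 2 - v ^ 2) / 2 - v + cosh a, (sinh a - cosh a) * u,
      (sinh a - cosh a) * (u ^ 2 - v ^ 2) / 2 - v + sinh a) := by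
  simp only [Xv, deriv_X1_snd, deriv_X2_snd, deriv_X3_snd]

lemma lorentz_Xu_Xu_eq_lorentz_Xv_Xv (u v : ℝ) :
    lorentz (Xu a u v) (Xu a u v) = lorentz (Xv a u v) (Xv a u v) := by
  rw [Xu_eq, Xv_eq]
  simp only [lorentz]
  linear_combination -cosh_sq_sub_sinh_sq a

lemma lorentz_Xu_Xv_eq_zero (u v : ℝ) : lorentz (Xu a u v) (Xv a u v) = 0 := by
  rw [Xu_eq, Xv_eq]
  simp only [lorentz]
  ring

end Surface

/-- The Björling surface based on a circle with lightlike axis is harmonic and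
Lorentz-conformal. -/
theorem lightlike_axis_harmonic_conformal (a : ℝ) :
    (∀ u v : ℝ,
      deriv (deriv (fun s => X1 a s v)) u + deriv (deriv (fun t => X1 a u t)) v = 0 ∧
      deriv (deriv (fun s => X2 a s v)) u + deriv (deriv (fun t => X2 a u t)) v = 0 ∧
      deriv (deriv (fun s => X3 a s v)) u + deriv (deriv (fun t => X3 a u t)) v = 0) ∧
    (∀ u v : ℝ,
      lorentz (Xu a u v) (Xu a u v) = lorentz (Xv a u v) (Xv a u v) ∧
      lorentz (Xu a u v) (Xv a u v) = 0) := by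
  exact ⟨fun u v => ⟨harmonic_X1 a u v, harmonic_X2 a u v, harmonic_X3 a u v⟩,
    fun u v => ⟨lorentz_Xu_Xu_eq_lorentz_Xv_Xv a u v, lorentz_Xu_Xv_eq_zero a u v⟩⟩
end

section
/- Let a ∈ ℝ and let X : ℝ² → ℝ³ be defined by X(u,v) = ( (sinh a − cosh a)·(u²v/2 − v³/6) + v·cosh a + u²/2 − v²/2 − 1 , u + (sinh a − cosh a)·u·v , (sinh a − cosh a)·(u²v/2 − v³/6) + v·sinh a + u²/2 − v²/2 ). Then for every u ∈ ℝ: (i) X(u,0) = (u²/2 − 1, u, u²/2); and (ii) the vector V(u) = ( sinh a·(2−u²)/2 + cosh a·u²/2 , u·(cosh a − sinh a) , −sinh a·u²/2 + cosh a·(u²+2)/2 ) satisfies ⟨V(u),V(u)⟩_L = −1, ⟨V(u), ∂X/∂u (u,0)⟩_L = 0 and ⟨V(u), ∂X/∂v (u,0)⟩_L = 0. -/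
open Real

/-- The Björling data normal field V(u) = sinh(a)·e₂(u) + cosh(a)·e₃(u). -/
noncomputable def V (a u : ℝ) : ℝ × ℝ × ℝ :=
  (sinh a * (2 - u^2) / 2 + cosh a * u^2 / 2,
   u * (cosh a - sinh a),
   - sinh a * u^2 / 2 + cosh a * (u^2 + 2) / 2)

lemma Xu_at_zero (a u : ℝ) : Xu a u 0 = (u, 1, u) := by
  have h1 : (fun s => X1 a s 0) = fun s : ℝ => s^2/2 - 1 := by
    funext s; simp [X1]
  have h2 : (fun s => X2 a s 0) = fun s : ℝ => s := by
    funext s; simp [X2]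
  have h3 : (fun s => X3 a s 0) = fun s : ℝ => s^2/2 := by
    funext s; simp [X3]
  have d1 : deriv (fun s : ℝ => s^2/2 - 1) u = u := by
    rw [(((hasDerivAt_pow 2 u).div_const 2).sub_const 1).deriv]; ring
  have d3 : deriv (fun s : ℝ => s^2/2) u = u := by
    rw [((hasDerivAt_pow 2 u).div_const 2).deriv]; ring
  simp [Xu, h1, h2, h3, d1, d3]

lemma Xv_at_zero (a u : ℝ) :
    Xv a u 0 = ((sinh a - cosh a) * (u^2/2) + cosh a, (sinh a - cosh a) * u,
      (sinh a - cosh a) * (u^2/2) + sinh a) := by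
  have h1 : HasDerivAt (fun t => X1 a u t) ((sinh a - cosh a) * (u^2/2) + cosh a) 0 := by
    unfold X1
    apply HasDerivAt.congr_deriv (f' := (sinh a - cosh a) * (u^2 * 1 / 2 - 3 * (0:ℝ)^2 * 1 / 6) + 1 * cosh a - 2 * (0:ℝ)^1 * 1 / 2)
    · apply HasDerivAt.sub_const
      apply HasDerivAt.sub
      · apply HasDerivAt.add_const
        apply HasDerivAt.add
        · exact (HasDerivAt.sub (((hasDerivAt_id 0).const_mul (u^2)).div_const 2)
            (((hasDerivAt_pow 3 0).div_const 6))).const_mul _ |>.congr_deriv (by ring)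
        · exact (hasDerivAt_id 0).mul_const (cosh a) |>.congr_deriv (by ring)
      · exact ((hasDerivAt_pow 2 0).div_const 2).congr_deriv (by norm_num)
    · norm_num
  have h2 : HasDerivAt (fun t => X2 a u t) ((sinh a - cosh a) * u) 0 := by
    unfold X2
    exact ((hasDerivAt_id 0).const_mul ((sinh a - cosh a) * u)).const_add u |>.congr_deriv (by ring)
  have h3 : HasDerivAt (fun t => X3 a u t) ((sinh a - cosh a) * (u^2/2) + sinh a) 0 := by
    unfold X3
    apply HasDerivAt.congr_deriv (f' := (sinh a - cosh a) * (u^2 * 1 / 2 - 3 * (0:ℝ)^2 * 1 / 6) + 1 * sinh a - 2 * (0:ℝ)^1 * 1 / 2)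
    · apply HasDerivAt.sub
      · apply HasDerivAt.add_const
        apply HasDerivAt.add
        · exact (HasDerivAt.sub (((hasDerivAt_id 0).const_mul (u^2)).div_const 2)
            (((hasDerivAt_pow 3 0).div_const 6))).const_mul _ |>.congr_deriv (by ring)
        · exact (hasDerivAt_id 0).mul_const (sinh a) |>.congr_deriv (by ring)
      · exact ((hasDerivAt_pow 2 0).div_const 2).congr_deriv (by norm_num)
    · norm_num
  simp [Xv, h1.deriv, h2.deriv, h3.deriv]

/-- The Björling surface with lightlike axis contains the circle (u²/2 − 1, u, u²/2) and
V(u) is a unit timelike vector field normal to the surface along it. -/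
theorem lightlike_axis_bjorling (a : ℝ) (u : ℝ) :
    (X1 a u 0, X2 a u 0, X3 a u 0) = (u^2 / 2 - 1, u, u^2 / 2) ∧
    lorentz (V a u) (V a u) = -1 ∧
    lorentz (V a u) (Xu a u 0) = 0 ∧
    lorentz (V a u) (Xv a u 0) = 0 := by
  have hc := Real.cosh_sq_sub_sinh_sq a
  refine ⟨by simp [X1, X2, X3], ?_, ?_, ?_⟩
  · simp only [lorentz, V]; nlinarith [hc]
  · rw [Xu_at_zero]; simp only [lorentz, V]; nlinarith [hc]
  · rw [Xv_at_zero]; simp only [lorentz, V]; nlinarith [hc]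
end

section
/- Let a ∈ ℝ and define X : ℝ² → ℝ³ by X(u,v) = ( (sinh a − cosh a)·(u²v/2 − v³/6) + v·cosh a + u²/2 − v²/2 − 1 , u + (sinh a − cosh a)·u·v , (sinh a − cosh a)·(u²v/2 − v³/6) + v·sinh a + u²/2 − v²/2 ). For every θ ∈ ℝ let Ψ(θ) be the linear map of ℝ³ with matrix rows (1 − θ²/2, θ, θ²/2), (−θ, 1, θ), (−θ²/2, θ, θ²/2 + 1). Then Ψ(θ)·X(u,v) = X(u+θ, v) for all θ, u, v ∈ ℝ; hence X is a rotational surface with respect to the lightlike axis spanned by (1,0,1). -/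
open Real

/-- Rotation of Lorentz–Minkowski space fixing the lightlike line spanned by (1,0,1),
with parameter θ. -/
noncomputable def Psi (θ : ℝ) (p : ℝ × ℝ × ℝ) : ℝ × ℝ × ℝ :=
  ((1 - θ^2/2) * p.1 + θ * p.2.1 + (θ^2/2) * p.2.2,
   -θ * p.1 + p.2.1 + θ * p.2.2,
   -(θ^2/2) * p.1 + θ * p.2.1 + (θ^2/2 + 1) * p.2.2)

/-- The Björling surface with lightlike axis is a rotational surface with respect to
the lightlike axis spanned by (1,0,1): rotating the surface by θ corresponds to
shifting the parameter u by θ. -/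
theorem lightlike_axis_rotational (a : ℝ) :
    ∀ θ u v : ℝ, Psi θ (X1 a u v, X2 a u v, X3 a u v) = (X1 a (u + θ) v, X2 a (u + θ) v, X3 a (u + θ) v) := by
  intro θ u v
  simp only [Psi, X1, X2, X3, Prod.mk.injEq]
  have h : Real.cosh a - Real.sinh a = Real.exp (-a) := by
    rw [Real.cosh_eq, Real.sinh_eq]; ring
  refine ⟨?_, ?_, ?_⟩ <;> nlinarith [Real.exp_pos (-a), h, sq_nonneg θ]
end
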